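/- arXiv:1608.00543 — 6 statements merged into one kernel-verified Lean document; each statement's English description precedes it below -/
import Mathlib

section
/- For any rational number r in (0,1), there exist unique integers a_1,...,a_n, all at most -2, such that -1/r equals the negative continued fraction a_1 - 1/(a_2 - 1/(... - 1/a_n)). -/
/-!
Every `ncf (a :: l)` with all entries `≤ -2` lies in `[a, a + 1)`, so its first entry is its floor
and the expansion is unique by induction on the list. For existence,
`-1/r = ⌊-1/r⌋ - 1/(-1/r')` with `r' = fract (-1/r) ∈ [0, 1)`; the denominator of `r'` is the
numerator of `r`, which is smaller than the denominator of `r`, and the recursion stops at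
`r' = 0`, where `-1/r' = 0 = ncf []`.
-/

/-- Negative continued fraction: `ncf [a] = a`, `ncf (a :: l) = a - 1 / ncf l`.
(Since `1/0 = 0` in `ℚ`, the singleton case is subsumed by the cons case.) -/
def ncf : List ℤ → ℚ
  | [] => 0
  | a :: l => (a : ℚ) - 1 / ncf l

lemma ncf_cons_mem_Ico : ∀ {l : List ℤ} (a : ℤ), (∀ b ∈ l, b ≤ -2) →
    ncf (a :: l) ∈ Set.Ico (a : ℚ) (a + 1)
  | [], a, _ => by simp [ncf]
  | b :: t, a, hl => by
    have hb : (b : ℚ) ≤ -2 := by exact_mod_cast hl b List.mem_cons_self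
    have hbt := (ncf_cons_mem_Ico b fun c hc => hl c (List.mem_cons_of_mem b hc)).2
    have hneg : ncf (b :: t) < 0 := by linarith
    have hinv : -1 < 1 / ncf (b :: t) := by rw [lt_div_iff_of_neg hneg]; linarith
    have hinv' : 1 / ncf (b :: t) < 0 := one_div_neg.mpr hneg
    change (a : ℚ) - 1 / ncf (b :: t) ∈ Set.Ico (a : ℚ) (a + 1)
    constructor <;> linarith

lemma floor_ncf_cons {l : List ℤ} (a : ℤ) (hl : ∀ b ∈ l, b ≤ -2) : ⌊ncf (a :: l)⌋ = a :=
  Int.floor_eq_iff.mpr (ncf_cons_mem_Ico a hl)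

lemma ncf_eq_zero_iff {l : List ℤ} (hl : ∀ a ∈ l, a ≤ -2) : ncf l = 0 ↔ l = [] := by
  cases l with
  | nil => simp [ncf]
  | cons a t =>
    have ha : (a : ℚ) ≤ -2 := by exact_mod_cast hl a List.mem_cons_self
    have := (ncf_cons_mem_Ico a fun b hb => hl b (List.mem_cons_of_mem a hb)).2
    simp only [reduceCtorEq, iff_false]
    linarith

lemma ncf_injOn : Set.InjOn ncf {l | ∀ a ∈ l, a ≤ -2} := by
  intro l₁ h₁ l₂ h₂ heq
  induction l₁ generalizing l₂ with
  | nil => exact ((ncf_eq_zero_iff h₂).mp (by rw [← heq]; rfl)).symm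
  | cons a t ih =>
    cases l₂ with
    | nil => exact (ncf_eq_zero_iff h₁).mp heq
    | cons b s =>
      have ht : ∀ c ∈ t, c ≤ -2 := fun c hc => h₁ c (List.mem_cons_of_mem a hc)
      have hs : ∀ c ∈ s, c ≤ -2 := fun c hc => h₂ c (List.mem_cons_of_mem b hc)
      obtain rfl : a = b := by rw [← floor_ncf_cons a ht, heq, floor_ncf_cons b hs]
      have htail : ncf t = ncf s := by simpa [ncf] using heq
      rw [ih ht hs htail]

lemma den_fract_neg_inv_lt {r : ℚ} (h0 : 0 < r) (h1 : r < 1) : (Int.fract (-r⁻¹)).den < r.den := by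
  rw [Rat.den_intFract, Rat.den_neg_eq_den, Rat.den_inv_of_ne_zero h0.ne']
  have := Rat.num_lt_denom_iff.mpr h1
  have := Rat.num_pos.mpr h0
  omega

lemma exists_ncf_eq_neg_inv (r : ℚ) (h0 : 0 ≤ r) (h1 : r < 1) :
    ∃ l : List ℤ, (∀ a ∈ l, a ≤ -2) ∧ ncf l = -r⁻¹ := by
  induction hd : r.den using Nat.strong_induction_on generalizing r with
  | _ n ih =>
    rcases h0.eq_or_lt with rfl | hpos
    · exact ⟨[], by simp, by simp [ncf]⟩
    set r' := Int.fract (-r⁻¹)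
    obtain ⟨l, hl, hval⟩ := ih r'.den (hd ▸ den_fract_neg_inv_lt hpos h1) r'
      (Int.fract_nonneg _) (Int.fract_lt_one _) rfl
    have hfloor : ⌊-r⁻¹⌋ ≤ -2 := by
      have : -r⁻¹ < -1 := neg_lt_neg ((one_lt_inv₀ hpos).mpr h1)
      have : ⌊-r⁻¹⌋ < -1 := Int.floor_lt.mpr (by exact_mod_cast this)
      omega
    refine ⟨⌊-r⁻¹⌋ :: l, ?_, ?_⟩
    · exact List.forall_mem_cons.mpr ⟨hfloor, hl⟩
    · change (⌊-r⁻¹⌋ : ℚ) - 1 / ncf l = -r⁻¹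
      rw [hval, one_div, inv_neg, inv_inv, sub_neg_eq_add, Int.floor_add_fract]

/-- Every rational `r ∈ (0,1)` has a unique negative continued fraction expansion
`-1/r = [a_1, …, a_n]` with all entries at most `-2`. -/
theorem unique_negative_continued_fraction (r : ℚ) (h0 : 0 < r) (h1 : r < 1) :
    ∃! l : List ℤ, l ≠ [] ∧ (∀ a ∈ l, a ≤ -2) ∧ ncf l = -1 / r := by
  obtain ⟨l, hl, hval⟩ := exists_ncf_eq_neg_inv r h0.le h1
  rw [neg_div, one_div]
  refine ⟨l, ⟨?_, hl, hval⟩, fun l' ⟨_, hl', hval'⟩ => ncf_injOn hl' hl (hval'.trans hval.symm)⟩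
  rw [Ne, ← ncf_eq_zero_iff hl, hval]
  exact neg_ne_zero.mpr (inv_ne_zero h0.ne')
end

section
/- Let r, s be rationals in (0,1) with r + s ≥ 1, and write -1/r = [a_1,...,a_n] and -1/s = [c_1,...,c_k] as negative continued fractions with all entries at most -2. Then there exist truncations [a_1,...,a_m] = -1/r' and [c_1,...,c_l] = -1/s' (with m ≤ n, l ≤ k, r' ∈ (0,1), s' ∈ (0,1)) such that r' + s' = 1. -/
/-! If the first entries of both expansions are `-2`, truncating both after one entry gives
`r' = s' = 1/2`. Otherwise, say `c₁ ≤ -3`; then `s < 1/2`, so `r > 1/2`, which forces `a₁ = -2` and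
`n ≥ 2`. Passing from `(r, s)` to `(2 - 1/r, s/(1 - s))` drops `a₁` from the first expansion and
raises `c₁` by one; it preserves the sign of `r + s - 1` and lowers the total length, so induction
applies, and truncations of the new pair summing to one lift back to truncations of the old pair. -/

theorem neg_one_div_mem_Ioo_of_lt_neg_one {K : Type*} [Field K] [LinearOrder K]
    [IsStrictOrderedRing K] {x : K} (hx : x < -1) : -1 / x ∈ Set.Ioo 0 1 :=
  ⟨div_pos_of_neg_of_neg (by norm_num) (by linarith), (div_lt_one_of_neg (by linarith)).2 hx⟩

theorem neg_one_div_add_one_mul_sub_one {K : Type*} [Field K] {r s : K} (hr : r ≠ 0) (hs : s ≠ 0) :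
    (-1 / r + 1) * (-1 / s + 1) - 1 = (1 - (r + s)) / (r * s) := by
  field_simp
  ring

theorem ncf_cons_lt_add_one : ∀ (a : ℤ) (l : List ℤ), (∀ b ∈ l, b ≤ -2) → ncf (a :: l) < a + 1
  | a, [], _ => by simp [ncf]
  | a, b :: l, hl => by
    have hb : (b : ℚ) ≤ -2 := by exact_mod_cast hl b List.mem_cons_self
    have hbl := ncf_cons_lt_add_one b l fun x hx => hl x (.tail _ hx)
    have := (neg_one_div_mem_Ioo_of_lt_neg_one (by linarith : ncf (b :: l) < -1)).2
    rw [ncf, sub_eq_add_neg, ← neg_div]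
    linarith

theorem ncf_lt_neg_one {L : List ℤ} (hne : L ≠ []) (hL : ∀ a ∈ L, a ≤ -2) : ncf L < -1 := by
  obtain ⟨a, l, rfl⟩ := List.exists_cons_of_ne_nil hne
  have ha : (a : ℚ) ≤ -2 := by exact_mod_cast hL a List.mem_cons_self
  linarith [ncf_cons_lt_add_one a l fun b hb => hL b (.tail _ hb)]

theorem ncf_take_lt_neg_one {L : List ℤ} {k : ℕ} (hk : 1 ≤ k) (hkL : k ≤ L.length)
    (hL : ∀ a ∈ L, a ≤ -2) : ncf (L.take k) < -1 :=
  ncf_lt_neg_one (List.ne_nil_of_length_pos (by rw [List.length_take]; omega)) fun a ha =>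
    hL a (List.mem_of_mem_take ha)

theorem ncf_cons_add_one (c : ℤ) (l : List ℤ) : ncf ((c + 1) :: l) = ncf (c :: l) + 1 := by
  simp only [ncf]
  push_cast
  ring

theorem ncf_neg_two_cons_add_one_mul_sub_one {l : List ℤ} (hl : ncf l ≠ 0) (z : ℚ) :
    (ncf (-2 :: l) + 1) * z - 1 = ((ncf l + 1) * (z + 1) - 1) / -ncf l := by
  simp only [ncf]
  field_simp
  ring

theorem eq_neg_two_and_ne_nil_of_mul_le_one {a c : ℤ} {A C : List ℤ}
    (hA : ∀ b ∈ a :: A, b ≤ -2) (hC : ∀ b ∈ C, b ≤ -2) (hc : c ≤ -3)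
    (h : (ncf (a :: A) + 1) * (ncf (c :: C) + 1) ≤ 1) : a = -2 ∧ A ≠ [] := by
  have hx := ncf_lt_neg_one (List.cons_ne_nil a A) hA
  have hy : ncf (c :: C) < -2 := by
    have : (c : ℚ) ≤ -3 := by exact_mod_cast hc
    linarith [ncf_cons_lt_add_one c C hC]
  have hx2 : -2 < ncf (a :: A) := by nlinarith
  have ha : -3 < a := by
    have := ncf_cons_lt_add_one a A fun b hb => hA b (.tail _ hb)
    exact_mod_cast (by linarith : (-3 : ℚ) < a)
  have ha2 := hA a List.mem_cons_self
  refine ⟨by omega, ?_⟩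
  rintro rfl
  simp only [ncf, div_zero, sub_zero] at hx2
  linarith [(show (a : ℚ) ≤ -2 by exact_mod_cast ha2)]

theorem ncf_add_one_mul_le_one_of_neg_two_cons {A C : List ℤ} {c : ℤ} (hA : ncf A < 0)
    (h : (ncf (-2 :: A) + 1) * (ncf (c :: C) + 1) ≤ 1) :
    (ncf A + 1) * (ncf ((c + 1) :: C) + 1) ≤ 1 := by
  have key := ncf_neg_two_cons_add_one_mul_sub_one hA.ne (ncf (c :: C) + 1)
  rw [eq_div_iff (by linarith)] at key
  rw [ncf_cons_add_one]
  nlinarith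

/-- For `x = -1/r` and `y = -1/s` one has `r + s - 1 = (1 - (x + 1) * (y + 1)) / (x * y)`, so the
condition `(x + 1) * (y + 1) = 1` says `r + s = 1`. -/
def HasDualTruncations (A C : List ℤ) : Prop :=
  ∃ m l, 1 ≤ m ∧ m ≤ A.length ∧ 1 ≤ l ∧ l ≤ C.length ∧
    (ncf (A.take m) + 1) * (ncf (C.take l) + 1) = 1

namespace HasDualTruncations

theorem symm {A C : List ℤ} (h : HasDualTruncations A C) : HasDualTruncations C A := by
  obtain ⟨m, l, hm1, hm, hl1, hl, heq⟩ := h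
  exact ⟨l, m, hl1, hl, hm1, hm, by rw [mul_comm, heq]⟩

theorem neg_two_cons {A C : List ℤ} {c : ℤ} (hA : ∀ a ∈ A, a ≤ -2)
    (h : HasDualTruncations A ((c + 1) :: C)) : HasDualTruncations (-2 :: A) (c :: C) := by
  obtain ⟨m, l, hm1, hm, hl1, hl, heq⟩ := h
  obtain ⟨l, rfl⟩ : ∃ l', l = l' + 1 := ⟨l - 1, by omega⟩
  have hlt := ncf_take_lt_neg_one hm1 hm hA
  refine ⟨m + 1, l + 1, by omega, by simpa using hm, hl1, by simpa using hl, ?_⟩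
  rw [List.take_succ_cons, ncf_cons_add_one] at heq
  have key := ncf_neg_two_cons_add_one_mul_sub_one (hlt.trans neg_one_lt_zero).ne
    (ncf (c :: C.take l) + 1)
  rw [heq, sub_self, zero_div] at key
  rw [List.take_succ_cons, List.take_succ_cons]
  linarith

end HasDualTruncations

theorem hasDualTruncations_of_mul_le_one {A C : List ℤ} (hA0 : A ≠ []) (hC0 : C ≠ [])
    (hA : ∀ a ∈ A, a ≤ -2) (hC : ∀ c ∈ C, c ≤ -2) (h : (ncf A + 1) * (ncf C + 1) ≤ 1) :
    HasDualTruncations A C := by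
  induction hn : A.length + C.length using Nat.strong_induction_on generalizing A C with
  | _ n ih =>
  obtain ⟨a, A, rfl⟩ := List.exists_cons_of_ne_nil hA0
  obtain ⟨c, C, rfl⟩ := List.exists_cons_of_ne_nil hC0
  clear hA0 hC0
  wlog hc : c ≤ -3 generalizing a A c C
  · by_cases ha : a ≤ -3
    · exact (this c C hC a A hA (by rwa [mul_comm]) (by rw [← hn, add_comm]) ha).symm
    · obtain rfl : a = -2 := by have := hA a List.mem_cons_self; omega
      obtain rfl : c = -2 := by have := hC c List.mem_cons_self; omega
      exact ⟨1, 1, le_rfl, by simp, le_rfl, by simp, by norm_num [ncf]⟩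
  have hC' : ∀ b ∈ C, b ≤ -2 := fun b hb => hC b (.tail _ hb)
  obtain ⟨rfl, hA0'⟩ := eq_neg_two_and_ne_nil_of_mul_le_one hA hC' hc h
  have hA' : ∀ b ∈ A, b ≤ -2 := fun b hb => hA b (.tail _ hb)
  refine .neg_two_cons hA' (ih _ ?_ hA0' (List.cons_ne_nil _ _) hA' ?_ ?_ rfl)
  · simp only [List.length_cons] at hn ⊢
    omega
  · simp only [List.mem_cons, forall_eq_or_imp]
    exact ⟨by omega, hC'⟩
  · exact ncf_add_one_mul_le_one_of_neg_two_cons (by linarith [ncf_lt_neg_one hA0' hA']) h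

theorem exists_truncations_summing_to_one_general (r s : ℚ)
    (hr0 : 0 < r) (hs0 : 0 < s) (hrs : 1 ≤ r + s)
    (A C : List ℤ) (hA : ∀ a ∈ A, a ≤ -2) (hC : ∀ c ∈ C, c ≤ -2)
    (eA : ncf A = -1 / r) (eC : ncf C = -1 / s) :
    ∃ (m l : ℕ) (r' s' : ℚ), 1 ≤ m ∧ m ≤ A.length ∧ 1 ≤ l ∧ l ≤ C.length ∧
      0 < r' ∧ r' < 1 ∧ 0 < s' ∧ s' < 1 ∧
      ncf (A.take m) = -1 / r' ∧ ncf (C.take l) = -1 / s' ∧ r' + s' = 1 := by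
  have hA0 : A ≠ [] := by
    rintro rfl
    exact (div_neg_of_neg_of_pos neg_one_lt_zero hr0).ne' eA
  have hC0 : C ≠ [] := by
    rintro rfl
    exact (div_neg_of_neg_of_pos neg_one_lt_zero hs0).ne' eC
  have hprod : (ncf A + 1) * (ncf C + 1) ≤ 1 := by
    rw [eA, eC, ← sub_nonpos, neg_one_div_add_one_mul_sub_one hr0.ne' hs0.ne']
    exact div_nonpos_of_nonpos_of_nonneg (by linarith) (by positivity)
  obtain ⟨m, l, hm1, hm, hl1, hl, heq⟩ := hasDualTruncations_of_mul_le_one hA0 hC0 hA hC hprod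
  obtain ⟨hr'0, hr'1⟩ := neg_one_div_mem_Ioo_of_lt_neg_one (ncf_take_lt_neg_one hm1 hm hA)
  obtain ⟨hs'0, hs'1⟩ := neg_one_div_mem_Ioo_of_lt_neg_one (ncf_take_lt_neg_one hl1 hl hC)
  have er' : ncf (A.take m) = -1 / (-1 / ncf (A.take m)) := by simp
  have es' : ncf (C.take l) = -1 / (-1 / ncf (C.take l)) := by simp
  refine ⟨m, l, _, _, hm1, hm, hl1, hl, hr'0, hr'1, hs'0, hs'1, er', es', ?_⟩
  rw [er', es', ← sub_eq_zero, neg_one_div_add_one_mul_sub_one hr'0.ne' hs'0.ne'] at heq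
  linarith [(div_eq_zero_iff.mp heq).resolve_right (mul_pos hr'0 hs'0).ne']

/-- Lecuona–Lisca, Lemma 3.2: if `r + s ≥ 1` with `r, s ∈ (0,1)` and
`-1/r = [a_1,…,a_n]`, `-1/s = [c_1,…,c_k]` (entries `≤ -2`), then there are
truncations `[a_1,…,a_m] = -1/r'` and `[c_1,…,c_l] = -1/s'` with `r' + s' = 1`. -/
theorem exists_truncations_summing_to_one (r s : ℚ)
    (hr0 : 0 < r) (hr1 : r < 1) (hs0 : 0 < s) (hs1 : s < 1) (hrs : 1 ≤ r + s)
    (A C : List ℤ) (hA : ∀ a ∈ A, a ≤ -2) (hC : ∀ c ∈ C, c ≤ -2)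
    (eA : ncf A = -1 / r) (eC : ncf C = -1 / s) :
    ∃ (m l : ℕ) (r' s' : ℚ), 1 ≤ m ∧ m ≤ A.length ∧ 1 ≤ l ∧ l ≤ C.length ∧
      0 < r' ∧ r' < 1 ∧ 0 < s' ∧ s' < 1 ∧
      ncf (A.take m) = -1 / r' ∧ ncf (C.take l) = -1 / s' ∧ r' + s' = 1 :=
  exists_truncations_summing_to_one_general r s hr0 hs0 hrs A C hA hC eA eC
end

section
/- Let r ∈ (0,1) be rational with -1/r = [a_1,...,a_m] (entries ≤ -2) and let s = 1 - r with -1/s = [c_1,...,c_l] (entries ≤ -2). Then the concatenated negative continued fraction [a_m, ..., a_1, -1, c_1, ..., c_l] equals 0; equivalently, the linear chain of unknots with these framings blows down to a single 0-framed unknot. -/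
/-!
If `ncf T = (ncf (a :: A))⁻¹`, then `ncf (a :: T) = a - ncf (a :: A) = (ncf A)⁻¹`: moving the
head of `A` onto `T` preserves the relation, so `A.reverse ++ T` can be evaluated by emptying
`A` term by term, ending at `A = []`, where `ncf T = 0⁻¹ = 0`. For the chain,
`ncf (-1 :: C) = -1 + s = -r`, which is `(ncf A)⁻¹` when `ncf A = -1 / r`.
-/

theorem ncf_cons_eq_inv_of_eq_inv {a : ℤ} {A T : List ℤ} (h : ncf T = (ncf (a :: A))⁻¹) :
    ncf (a :: T) = (ncf A)⁻¹ := by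
  simp only [ncf, one_div] at h ⊢
  rw [h, inv_inv]
  ring

theorem ncf_reverse_append_eq_zero_of_eq_inv (A T : List ℤ) (h : ncf T = (ncf A)⁻¹) :
    ncf (A.reverse ++ T) = 0 := by
  induction A generalizing T with
  | nil => simpa [ncf] using h
  | cons a A ih =>
    rw [List.reverse_cons, List.append_assoc]
    exact ih (a :: T) (ncf_cons_eq_inv_of_eq_inv h)

theorem concatenated_chain_evaluates_to_zero_general (r s : ℚ)
    (hs : s = 1 - r)
    (A C : List ℤ)
    (eA : ncf A = -1 / r) (eC : ncf C = -1 / s) :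
    ncf (A.reverse ++ (-1 : ℤ) :: C) = 0 := by
  refine ncf_reverse_append_eq_zero_of_eq_inv A _ ?_
  have hcons : ncf ((-1 : ℤ) :: C) = -r := by
    simp only [ncf, eC, hs, one_div, inv_div, Int.cast_neg, Int.cast_one]
    ring
  rw [hcons, eA, inv_div]
  ring

/-- If `-1/r = [a_1,…,a_m]` and `-1/(1-r) = [c_1,…,c_l]` (entries `≤ -2`), then the
concatenated negative continued fraction `[a_m,…,a_1,-1,c_1,…,c_l]` evaluates to `0`:
the chain of unknots with these framings blows down to a single `0`-framed unknot. -/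
theorem concatenated_chain_evaluates_to_zero (r s : ℚ)
    (hr0 : 0 < r) (hr1 : r < 1) (hs : s = 1 - r)
    (A C : List ℤ) (hA : ∀ a ∈ A, a ≤ -2) (hC : ∀ c ∈ C, c ≤ -2)
    (eA : ncf A = -1 / r) (eC : ncf C = -1 / s) :
    ncf (A.reverse ++ (-1 : ℤ) :: C) = 0 :=
  concatenated_chain_evaluates_to_zero_general r s hs A C eA eC
end

section
/- Let r ∈ (0,1) be rational with negative continued fraction expansion -1/r = [a_1,...,a_n], all a_i ≤ -2, and let [c_1,...,c_{m'}] (all c_j ≤ -2) be the expansion of -1/(1-r). Then Σ_j(-a_j - 2) = m' - 1 and Σ_j(-c_j - 2) = n - 1. -/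
lemma ncf_cons (a : ℤ) (l : List ℤ) : ncf (a :: l) = (a : ℚ) - 1 / ncf l := rfl

lemma ncf_nil : ncf ([] : List ℤ) = 0 := rfl

lemma ncf_lt_neg_one_s8 : ∀ A : List ℤ, A ≠ [] → (∀ a ∈ A, a ≤ -2) → ncf A < -1 := by
  intro A
  induction A with
  | nil => intro h; exact absurd rfl h
  | cons a A' ih =>
    intro _ h
    have ha : a ≤ -2 := h a (by simp)
    have ha' : ((a:ℚ)) ≤ -2 := by exact_mod_cast ha
    by_cases hA' : A' = []
    · subst hA'
      rw [ncf_cons, ncf_nil]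
      norm_num
      linarith
    · have hx' : ncf A' < -1 := ih hA' (fun b hb => h b (by simp [hb]))
      have hx0 : ncf A' ≠ 0 := by linarith
      have hinv : (1:ℚ) / ncf A' * ncf A' = 1 := div_mul_cancel₀ 1 hx0
      have h1 : (1:ℚ) / ncf A' > -1 := by nlinarith
      rw [ncf_cons]
      linarith

lemma ncf_bounds (a : ℤ) (A' : List ℤ) (h : ∀ b ∈ A', b ≤ -2) :
    (a : ℚ) ≤ ncf (a :: A') ∧ ncf (a :: A') < a + 1 := by
  by_cases hA' : A' = []
  · subst hA'; rw [ncf_cons, ncf_nil]; norm_num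
  · have hx' : ncf A' < -1 := ncf_lt_neg_one_s8 A' hA' h
    have hx0 : ncf A' ≠ 0 := by linarith
    have hinv : (1:ℚ) / ncf A' * ncf A' = 1 := div_mul_cancel₀ 1 hx0
    have h1 : (1:ℚ) / ncf A' > -1 := by nlinarith
    have h2 : (1:ℚ) / ncf A' < 0 := by nlinarith
    rw [ncf_cons]
    constructor <;> linarith

lemma ncf_inj : ∀ A C : List ℤ, (∀ a ∈ A, a ≤ -2) → (∀ c ∈ C, c ≤ -2) →
    ncf A = ncf C → A = C := by
  intro A
  induction A with
  | nil =>
    intro C _ hC he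
    cases C with
    | nil => rfl
    | cons c C' =>
      exfalso
      have h1 := ncf_lt_neg_one_s8 (c :: C') (by simp) hC
      rw [← he, ncf_nil] at h1
      norm_num at h1
  | cons a A' ih =>
    intro C hA hC he
    cases C with
    | nil =>
      exfalso
      have h1 := ncf_lt_neg_one_s8 (a :: A') (by simp) hA
      rw [he, ncf_nil] at h1
      norm_num at h1
    | cons c C' =>
      have hA' : ∀ b ∈ A', b ≤ -2 := fun b hb => hA b (by simp [hb])
      have hC' : ∀ b ∈ C', b ≤ -2 := fun b hb => hC b (by simp [hb])
      have bA := ncf_bounds a A' hA'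
      have bC := ncf_bounds c C' hC'
      have hac : a = c := by
        rw [he] at bA
        have h1 : (a : ℚ) < c + 1 := lt_of_le_of_lt bA.1 bC.2
        have h2 : (c : ℚ) < a + 1 := lt_of_le_of_lt bC.1 bA.2
        have h1' : a < c + 1 := by exact_mod_cast h1
        have h2' : c < a + 1 := by exact_mod_cast h2
        omega
      subst hac
      have htail : (1:ℚ) / ncf A' = 1 / ncf C' := by
        rw [ncf_cons, ncf_cons] at he
        linarith
      by_cases hA'e : A' = []
      · subst hA'e
        by_cases hC'e : C' = []
        · rw [hC'e]
        · exfalso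
          have hx' : ncf C' < -1 := ncf_lt_neg_one_s8 C' hC'e hC'
          have hx0 : ncf C' ≠ 0 := by linarith
          have hinv : (1:ℚ) / ncf C' * ncf C' = 1 := div_mul_cancel₀ 1 hx0
          rw [ncf_nil] at htail
          norm_num at htail
          rw [← htail] at hinv
          norm_num at hinv
      · by_cases hC'e : C' = []
        · exfalso
          have hx' : ncf A' < -1 := ncf_lt_neg_one_s8 A' hA'e hA'
          have hx0 : ncf A' ≠ 0 := by linarith
          have hinv : (1:ℚ) / ncf A' * ncf A' = 1 := div_mul_cancel₀ 1 hx0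
          rw [hC'e, ncf_nil] at htail
          norm_num at htail
          rw [htail] at hinv
          norm_num at hinv
        · have hx0 : ncf A' ≠ 0 := by
            have := ncf_lt_neg_one_s8 A' hA'e hA'; linarith
          have hy0 : ncf C' ≠ 0 := by
            have := ncf_lt_neg_one_s8 C' hC'e hC'; linarith
          have heq : ncf A' = ncf C' := by
            field_simp at htail
            linarith
          rw [ih C' hA' hC' heq]

lemma ncf_replicate : ∀ k : ℕ, 1 ≤ k →
    ncf (List.replicate k (-2)) = -((k:ℚ)+1)/k := by
  intro k
  induction k with
  | zero => intro h; omega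
  | succ n ih =>
    intro _
    by_cases hn : n = 0
    · subst hn; simp [ncf]; norm_num
    · have hn1 : 1 ≤ n := Nat.one_le_iff_ne_zero.mpr hn
      have hrec := ih hn1
      have hn0 : (n:ℚ) ≠ 0 := Nat.cast_ne_zero.mpr hn
      have hn0' : (0:ℚ) < n := by positivity
      have h1 : ((n:ℚ)+1) ≠ 0 := by positivity
      have hneg : -((n:ℚ)+1) ≠ 0 := by intro h; exact h1 (by linarith [neg_eq_zero.mp h])
      have hneg2 : (-1 - (n:ℚ)) ≠ 0 := by intro h; exact h1 (by linarith)
      rw [List.replicate_succ, ncf_cons, hrec]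
      push_cast
      rw [one_div_div, div_neg, sub_neg_eq_add, eq_div_iff h1, add_mul,
        div_mul_cancel₀ _ h1]
      ring

lemma exists_dual : ∀ N : ℕ, ∀ A : List ℤ, (A.map Int.natAbs).sum ≤ N → A ≠ [] →
    (∀ a ∈ A, a ≤ -2) →
    ∃ C : List ℤ, C ≠ [] ∧ (∀ c ∈ C, c ≤ -2) ∧
      ncf C = -(ncf A) / (ncf A + 1) ∧
      (A.map fun a => -a - 2).sum = (C.length : ℤ) - 1 ∧
      (C.map fun c => -c - 2).sum = (A.length : ℤ) - 1 := by
  intro N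
  induction N with
  | zero =>
    intro A hm hne hA
    exfalso
    cases A with
    | nil => exact hne rfl
    | cons a A' =>
      have ha : a ≤ -2 := hA a (by simp)
      have : 2 ≤ a.natAbs := by omega
      simp [List.map_cons] at hm
      omega
  | succ N ih =>
    intro A hm hne hA
    cases A with
    | nil => exact absurd rfl hne
    | cons a A' =>
      have ha : a ≤ -2 := hA a (by simp)
      have hA' : ∀ b ∈ A', b ≤ -2 := fun b hb => hA b (by simp [hb])
      by_cases hA'e : A' = []
      · -- base case: A = [a], dual is replicate (-a-1) (-2)
        subst hA'e
        have hk : 1 ≤ (-a-1).toNat := by omega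
        refine ⟨List.replicate (-a-1).toNat (-2), ?_, ?_, ?_, ?_, ?_⟩
        · intro h
          have := congrArg List.length h
          simp at this
          omega
        · intro c hc
          rw [List.eq_of_mem_replicate hc]
        · rw [ncf_replicate _ hk]
          have hcast : (((-a-1).toNat : ℚ)) = -(a:ℚ) - 1 := by
            have h' : (((-a-1).toNat : ℤ)) = -a-1 := by omega
            exact_mod_cast congrArg (Int.cast : ℤ → ℚ) h'
          rw [hcast]
          have h1 : ncf [a] = (a:ℚ) := by rw [ncf_cons, ncf_nil]; norm_num
          rw [h1]
          have ha2 : (a:ℚ) ≤ -2 := by exact_mod_cast ha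
          rw [div_eq_div_iff (by linarith) (by linarith)]
          ring
        · simp
          omega
        · simp [List.sum_replicate]
      · -- A' nonempty
        have hx' : ncf A' < -1 := ncf_lt_neg_one_s8 A' hA'e hA'
        have hx'0 : ncf A' ≠ 0 := by linarith
        have hx'1 : ncf A' + 1 ≠ 0 := by intro h; linarith [eq_neg_of_add_eq_zero_left h]
        by_cases ha2 : a = -2
        · -- case a = -2: dual of A' with first entry decreased by 1
          subst ha2
          have hm' : (A'.map Int.natAbs).sum ≤ N := by
            simp [List.map_cons] at hm; omega
          obtain ⟨C', hC'ne, hC', hC'v, hs1, hs2⟩ := ih A' hm' hA'e hA'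
          cases C' with
          | nil => exact absurd rfl hC'ne
          | cons c C'' =>
            refine ⟨(c-1) :: C'', by simp, ?_, ?_, ?_, ?_⟩
            · intro b hb
              rcases List.mem_cons.mp hb with h | h
              · have := hC' c (by simp); omega
              · exact hC' b (by simp [h])
            · have hv : ncf ((c-1) :: C'') = ncf (c :: C'') - 1 := by
                rw [ncf_cons, ncf_cons]; push_cast; ring
              have hz : ncf (-2 :: A') = -2 - 1 / ncf A' := by
                rw [ncf_cons]; norm_num
              have hzlt : ncf (-2 :: A') < -1 :=
                ncf_lt_neg_one_s8 _ (by simp) (fun b hb => hA b hb)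
              have hz1 : ncf (-2 :: A') + 1 ≠ 0 := by
                intro h; linarith [eq_neg_of_add_eq_zero_left h]
              rw [hv, hC'v]
              rw [div_sub_one hx'1]
              rw [div_eq_div_iff hx'1 hz1, hz]
              field_simp
              ring
            · simp only [List.map_cons, List.sum_cons] at hs1 ⊢
              simp at hs1 ⊢
              omega
            · simp only [List.map_cons, List.sum_cons, List.length_cons] at hs2 ⊢
              push_cast at hs2 ⊢
              omega
        · -- case a ≤ -3: reduce to (a+1) :: A', dual gets -2 prepended
          have ha3 : a ≤ -3 := by omega
          have hm' : (((a+1) :: A').map Int.natAbs).sum ≤ N := by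
            simp [List.map_cons] at hm ⊢
            have h1 : (a+1).natAbs = a.natAbs - 1 := by omega
            omega
          have hAt : ∀ b ∈ (a+1) :: A', b ≤ -2 := by
            intro b hb
            rcases List.mem_cons.mp hb with h | h
            · omega
            · exact hA' b h
          obtain ⟨C', hC'ne, hC', hC'v, hs1, hs2⟩ := ih ((a+1) :: A') hm' (by simp) hAt
          have hxt : ncf ((a+1) :: A') = ncf (a :: A') + 1 := by
            rw [ncf_cons, ncf_cons]; push_cast; ring
          have hxtlt : ncf ((a+1) :: A') < -1 := ncf_lt_neg_one_s8 _ (by simp) hAt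
          have hw : ncf (a :: A') < -2 := by linarith
          have hw1 : ncf (a :: A') + 1 ≠ 0 := by
            intro h; linarith [eq_neg_of_add_eq_zero_left h]
          have hw2 : ncf (a :: A') + 1 + 1 ≠ 0 := by
            intro h; nlinarith
          have hCv : ncf C' < -1 := ncf_lt_neg_one_s8 C' hC'ne hC'
          have hC0 : ncf C' ≠ 0 := by linarith
          refine ⟨-2 :: C', by simp, ?_, ?_, ?_, ?_⟩
          · intro b hb
            rcases List.mem_cons.mp hb with h | h
            · omega
            · exact hC' b h
          · have hz : ncf (-2 :: C') = -2 - 1 / ncf C' := by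
              rw [ncf_cons]; norm_num
            rw [hz, hC'v, hxt]
            set w := ncf (a :: A') with hwdef
            have hnum : -(w + 1) ≠ 0 := by intro h; exact hw1 (by linarith [neg_eq_zero.mp h])
            have hnum2 : (-1 - w) ≠ 0 := by intro h; exact hw1 (by linarith)
            rw [one_div_div, div_neg, sub_neg_eq_add, eq_div_iff hw1, add_mul,
              div_mul_cancel₀ _ hw1]
            ring
          · simp only [List.map_cons, List.sum_cons, List.length_cons] at hs1 ⊢
            push_cast at hs1 ⊢
            omega
          · simp only [List.map_cons, List.sum_cons, List.length_cons] at hs2 ⊢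
            push_cast at hs2 ⊢
            omega

/-- A consequence of Riemenschneider duality: if `-1/r = [a_1,…,a_n]` and
`-1/(1-r) = [c_1,…,c_{m'}]` (all entries `≤ -2`), then the total excess of one string
equals one less than the length of the dual string:
`Σ_j (-a_j - 2) = m' - 1` and `Σ_j (-c_j - 2) = n - 1`. -/
theorem total_excess_eq_dual_length_sub_one (r : ℚ) (hr0 : 0 < r) (hr1 : r < 1)
    (A C : List ℤ) (hA : ∀ a ∈ A, a ≤ -2) (hC : ∀ c ∈ C, c ≤ -2)
    (eA : ncf A = -1 / r) (eC : ncf C = -1 / (1 - r)) :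
    (A.map fun a => -a - 2).sum = (C.length : ℤ) - 1 ∧
    (C.map fun c => -c - 2).sum = (A.length : ℤ) - 1 := by
  have hr0' : r ≠ 0 := ne_of_gt hr0
  have h1r : (1:ℚ) - r ≠ 0 := by intro h; apply hr1.ne; linarith
  have hAne : A ≠ [] := by
    intro h
    rw [h, ncf_nil] at eA
    have : (-1:ℚ)/r < 0 := div_neg_of_neg_of_pos (by norm_num) hr0
    rw [← eA] at this
    norm_num at this
  obtain ⟨C₀, hC₀ne, hC₀, hC₀v, hs1, hs2⟩ := exists_dual _ A le_rfl hAne hA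
  have hCeq : C = C₀ := by
    apply ncf_inj C C₀ hC hC₀
    rw [eC, hC₀v, eA]
    have hden : -1/r + 1 ≠ 0 := by
      intro h
      have : (-1:ℚ)/r = -1 := by linarith
      rw [div_eq_iff hr0'] at this
      apply hr1.ne
      linarith
    rw [div_eq_div_iff h1r ?_]
    · field_simp
      ring
    · exact hden
  rw [hCeq]
  exact ⟨hs1, hs2⟩
end

section
/- In the free abelian group generated by symbols D_S indexed by subsets S of a finite set H of holes with |S| ≥ 1 (convex Dehn twists up to conjugation in the abelianized planar mapping class group, with lantern relations imposed), every generator D_S with |S| = r ≥ 3 equals the sum of all pairwise generators D_{{α,β}} for α,β ∈ S minus (r-2) times the sum of boundary generators D_{{α}} over α ∈ S, weighted so that: D_S = Σ_{{α,β}⊆S} D_{{α,β}} - (r-2) Σ_{α∈S} D_{{α}}. -/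
/-- The free abelian group on convex Dehn twists `D_S`, indexed by nonempty subsets
`S` of a finite set `α` of holes. -/
abbrev TwistGroup (α : Type*) [DecidableEq α] : Type _ :=
  {S : Finset α // S.Nonempty} →₀ ℤ

/-- The generator `D_S` (zero if `S = ∅`). -/
noncomputable def Dg {α : Type*} [DecidableEq α] (S : Finset α) : TwistGroup α :=
  if h : S.Nonempty then Finsupp.single ⟨S, h⟩ 1 else 0

/-- Abelianized lantern relators:
`D_{A∪B∪C} + D_A + D_B + D_C - D_{A∪B} - D_{B∪C} - D_{A∪C}`
for pairwise disjoint nonempty `A, B, C`. -/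
noncomputable def lanternRelators (α : Type*) [DecidableEq α] : AddSubgroup (TwistGroup α) :=
  AddSubgroup.closure
    { x | ∃ A B C : Finset α, A.Nonempty ∧ B.Nonempty ∧ C.Nonempty ∧
        Disjoint A B ∧ Disjoint A C ∧ Disjoint B C ∧
        x = Dg (A ∪ B ∪ C) + Dg A + Dg B + Dg C - Dg (A ∪ B) - Dg (B ∪ C) - Dg (A ∪ C) }

/-!
Let `f` be any function satisfying the lantern relations, such as `S ↦ [D_S]`, and write
`Φ(S) = ∑_{P ⊆ S, |P| = 2} f P - (|S| - 2) ∑_{a ∈ S} f {a}`. For `S = {a} ⊔ {b} ⊔ T`, `Φ`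
satisfies the lantern relation for `({a}, {b}, T)` identically, and it agrees with `f` on sets
with one or two elements. The lantern relation of `f` for `({a}, {b}, T)` expresses `f S` through
values of `f` on proper subsets of `S`, so strong induction on `|S|` gives `f = Φ`.
-/

open Finset

theorem Finset.sum_powersetCard_two_insert {α M : Type*} [DecidableEq α] [AddCommMonoid M]
    {a : α} {T : Finset α} (ha : a ∉ T) (f : Finset α → M) :
    ∑ P ∈ (insert a T).powersetCard 2, f P =
      ∑ P ∈ T.powersetCard 2, f P + ∑ t ∈ T, f {a, t} := by
  rw [powersetCard_succ_insert ha 1, sum_union, sum_image, powersetCard_one, sum_map]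
  · rfl
  · intro s hs t ht hst
    rw [← erase_insert fun h => ha ((mem_powersetCard.mp hs).1 h),
      ← erase_insert fun h => ha ((mem_powersetCard.mp ht).1 h), hst]
  · refine disjoint_right.mpr fun s hs hs' => ?_
    obtain ⟨t, -, rfl⟩ := mem_image.mp hs
    exact ha ((mem_powersetCard.mp hs').1 (mem_insert_self a t))

theorem Finset.exists_eq_insert_insert_of_three_le_card {α : Type*} [DecidableEq α]
    {S : Finset α} (hS : 3 ≤ #S) :
    ∃ a b T, a ≠ b ∧ a ∉ T ∧ b ∉ T ∧ T.Nonempty ∧ S = insert a (insert b T) := by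
  obtain ⟨n, hn⟩ := Nat.exists_eq_add_of_le' hS
  obtain ⟨a, U, haU, rfl, hU⟩ := card_eq_succ.mp hn
  obtain ⟨b, T, hbT, rfl, hT⟩ := card_eq_succ.mp hU
  refine ⟨a, b, T, ?_, fun h => haU (mem_insert_of_mem h), hbT, card_pos.mp (by omega), rfl⟩
  rintro rfl
  exact haU (mem_insert_self a T)

section Lantern

variable {α G : Type*} [AddCommGroup G]

def SatisfiesLantern [DecidableEq α] (f : Finset α → G) : Prop :=
  ∀ ⦃A B C : Finset α⦄, A.Nonempty → B.Nonempty → C.Nonempty →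
    Disjoint A B → Disjoint A C → Disjoint B C →
    f (A ∪ B ∪ C) + f A + f B + f C = f (A ∪ B) + f (B ∪ C) + f (A ∪ C)

def pairwiseExpansion (f : Finset α → G) (S : Finset α) : G :=
  ∑ P ∈ S.powersetCard 2, f P - ((#S : ℤ) - 2) • ∑ a ∈ S, f {a}

variable (f : Finset α → G)

theorem pairwiseExpansion_singleton (a : α) : pairwiseExpansion f {a} = f {a} := by
  simp [pairwiseExpansion, powersetCard_eq_empty.mpr (by simp : #{a} < 2)]

theorem pairwiseExpansion_pair [DecidableEq α] {a b : α} (hab : a ≠ b) :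
    pairwiseExpansion f {a, b} = f {a, b} := by
  have hcard : #{a, b} = 2 := card_pair hab
  have hpairs : ({a, b} : Finset α).powersetCard 2 = {{a, b}} := by
    rw [← hcard, powersetCard_self]
  simp [pairwiseExpansion, hpairs, hcard]

theorem pairwiseExpansion_insert_insert [DecidableEq α] {a b : α} {T : Finset α} (hab : a ≠ b)
    (ha : a ∉ T) (hb : b ∉ T) :
    pairwiseExpansion f (insert a (insert b T)) = f {a, b} + pairwiseExpansion f (insert a T) +
      pairwiseExpansion f (insert b T) - f {a} - f {b} - pairwiseExpansion f T := by
  have ha' : a ∉ insert b T := by simp [hab, ha]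
  simp only [pairwiseExpansion, sum_powersetCard_two_insert, sum_insert, card_insert_of_notMem,
    ha, hb, ha', not_false_eq_true]
  push_cast
  module

theorem SatisfiesLantern.eq_pairwiseExpansion [DecidableEq α] {f : Finset α → G}
    (hf : SatisfiesLantern f) {S : Finset α} (hS : S.Nonempty) : f S = pairwiseExpansion f S := by
  induction hn : #S using Nat.strong_induction_on generalizing S with
  | _ n ih =>
  obtain hn1 | hn2 | hn3 : n = 1 ∨ n = 2 ∨ 3 ≤ n := by have := hS.card_pos; omega
  · obtain ⟨a, rfl⟩ := card_eq_one.mp (hn ▸ hn1)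
    exact (pairwiseExpansion_singleton f a).symm
  · obtain ⟨a, b, hab, rfl⟩ := card_eq_two.mp (hn ▸ hn2)
    exact (pairwiseExpansion_pair f hab).symm
  obtain ⟨a, b, T, hab, ha, hb, hT, rfl⟩ :=
    exists_eq_insert_insert_of_three_le_card (hn ▸ hn3)
  have hcard : #(insert a (insert b T)) = #T + 2 := by
    rw [card_insert_of_notMem (by simp [hab, ha]), card_insert_of_notMem hb]
  have lantern := hf (singleton_nonempty a) (singleton_nonempty b) hT
    (disjoint_singleton.mpr hab) (disjoint_singleton_left.mpr ha) (disjoint_singleton_left.mpr hb)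
  simp only [← insert_eq, insert_union] at lantern
  have hfa := ih _ (by rw [card_insert_of_notMem ha]; omega) (insert_nonempty a T) rfl
  have hfb := ih _ (by rw [card_insert_of_notMem hb]; omega) (insert_nonempty b T) rfl
  have hfT := ih _ (by omega) hT rfl
  rw [pairwiseExpansion_insert_insert f hab ha hb, ← hfa, ← hfb, ← hfT]
  linear_combination (norm := abel) lantern

end Lantern

theorem satisfiesLantern_mk_Dg (α : Type*) [DecidableEq α] :
    SatisfiesLantern fun S : Finset α => (Dg S : TwistGroup α ⧸ lanternRelators α) := by
  intro A B C hA hB hC hAB hAC hBC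
  have hrel : Dg (A ∪ B ∪ C) + Dg A + Dg B + Dg C - Dg (A ∪ B) - Dg (B ∪ C) - Dg (A ∪ C)
      ∈ lanternRelators α :=
    AddSubgroup.subset_closure ⟨A, B, C, hA, hB, hC, hAB, hAC, hBC, rfl⟩
  rw [← QuotientAddGroup.eq_zero_iff] at hrel
  simp only [QuotientAddGroup.mk_add, QuotientAddGroup.mk_sub] at hrel
  linear_combination (norm := abel) hrel

theorem twist_reduces_to_pairwise_and_boundary_general
    {α : Type*} [DecidableEq α] (S : Finset α) (h : 3 ≤ S.card) :
    (QuotientAddGroup.mk (Dg S) : TwistGroup α ⧸ lanternRelators α) =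
      QuotientAddGroup.mk
        ((S.powersetCard 2).sum Dg - ((S.card : ℤ) - 2) • S.sum fun a => Dg {a}) := by
  have hS : S.Nonempty := card_pos.mp (by omega)
  rw [(satisfiesLantern_mk_Dg α).eq_pairwiseExpansion hS, pairwiseExpansion]
  simp only [QuotientAddGroup.mk_sub, QuotientAddGroup.mk_zsmul, QuotientAddGroup.mk_sum]

/-- In the abelianization of the planar mapping class group (free abelian group on the
`D_S` modulo lantern relations), every `D_S` with `|S| = r ≥ 3` equals the sum of all
pairwise generators over pairs in `S` minus `(r-2)` times the sum of boundary
generators over holes of `S`. -/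
theorem twist_reduces_to_pairwise_and_boundary
    {α : Type*} [Fintype α] [DecidableEq α] (S : Finset α) (h : 3 ≤ S.card) :
    (QuotientAddGroup.mk (Dg S) : TwistGroup α ⧸ lanternRelators α) =
      QuotientAddGroup.mk
        ((S.powersetCard 2).sum Dg - ((S.card : ℤ) - 2) • S.sum fun a => Dg {a}) :=
  twist_reduces_to_pairwise_and_boundary_general S h
end

section
/- Abelianized daisy relation: in the free abelian group on D_S modulo abelianized lantern relations, for pairwise disjoint nonempty sets A_1,...,A_b, C of holes, b ≥ 2, one has D_{C ∪ A_1} + D_{C ∪ A_2} + ... + D_{C ∪ A_b} + D_{A_1 ∪ ... ∪ A_b} = D_{A_1} + ... + D_{A_b} + (b-1)·D_C + D_{C ∪ A_1 ∪ ... ∪ A_b}. -/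
/-- The lantern relator itself lies in the subgroup of relators. -/
lemma lantern_mem {α : Type*} [DecidableEq α] {A B C : Finset α}
    (hA : A.Nonempty) (hB : B.Nonempty) (hC : C.Nonempty)
    (hAB : Disjoint A B) (hAC : Disjoint A C) (hBC : Disjoint B C) :
    Dg (A ∪ B ∪ C) + Dg A + Dg B + Dg C - Dg (A ∪ B) - Dg (B ∪ C) - Dg (A ∪ C)
      ∈ lanternRelators α :=
  AddSubgroup.subset_closure ⟨A, B, C, hA, hB, hC, hAB, hAC, hBC, rfl⟩

/-- Key membership lemma: the difference of the two sides of the daisy relation lies in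
the subgroup generated by lantern relators. -/
lemma daisy_diff_mem {α : Type*} [DecidableEq α]
    (b : ℕ) (hb : 2 ≤ b) (A : Fin b → Finset α) (C : Finset α)
    (hA : ∀ i, (A i).Nonempty) (hC : C.Nonempty)
    (hAA : ∀ i j, i ≠ j → Disjoint (A i) (A j))
    (hCA : ∀ i, Disjoint C (A i)) :
    (∑ i, Dg (C ∪ A i) + Dg (Finset.univ.sup A)) -
      (∑ i, Dg (A i) + ((b : ℤ) - 1) • Dg C + Dg (C ∪ Finset.univ.sup A))
      ∈ lanternRelators α := by
  induction b, hb using Nat.le_induction with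
  | base =>
    have hsup : Finset.univ.sup A = A 0 ∪ A 1 := by
      apply le_antisymm
      · exact Finset.sup_le fun i _ => by
          fin_cases i
          · exact Finset.subset_union_left
          · exact Finset.subset_union_right
      · exact Finset.union_subset (Finset.le_sup (Finset.mem_univ 0))
          (Finset.le_sup (Finset.mem_univ 1))
    have hr := lantern_mem (hA 0) (hA 1) hC (hAA 0 1 (by decide)) (hCA 0).symm (hCA 1).symm
    have h1 : C ∪ A 0 = A 0 ∪ C := Finset.union_comm _ _
    have h2 : C ∪ A 1 = A 1 ∪ C := Finset.union_comm _ _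
    have h3 : C ∪ (A 0 ∪ A 1) = A 0 ∪ A 1 ∪ C := Finset.union_comm _ _
    have := AddSubgroup.neg_mem _ hr
    convert this using 1
    rw [hsup, Fin.sum_univ_two, Fin.sum_univ_two, h1, h2, h3]
    push_cast
    abel
  | succ b hb ih =>
    set A' : Fin b → Finset α := fun i => A i.castSucc with hA'
    set L : Finset α := A (Fin.last b) with hL
    set U : Finset α := Finset.univ.sup A' with hU
    have hsup : Finset.univ.sup A = U ∪ L := by
      apply le_antisymm
      · apply Finset.sup_le; intro i _
        induction i using Fin.lastCases with
        | last => exact Finset.subset_union_right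
        | cast j =>
          exact (Finset.le_sup (f := A') (Finset.mem_univ j)).trans Finset.subset_union_left
      · exact Finset.union_subset
          (Finset.sup_le fun j _ => Finset.le_sup (Finset.mem_univ j.castSucc))
          (Finset.le_sup (Finset.mem_univ (Fin.last b)))
    have hUne : U.Nonempty := by
      have h0 : b ≠ 0 := by omega
      exact (hA (Fin.castSucc ⟨0, Nat.pos_of_ne_zero h0⟩)).mono
        (Finset.le_sup (f := A') (Finset.mem_univ _))
    have hdisjUL : Disjoint U L := by
      rw [hU, Finset.disjoint_sup_left]
      intro j _
      exact hAA _ _ (Fin.ne_last_of_lt (Fin.castSucc_lt_last j))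
    have hdisjUC : Disjoint U C := by
      rw [hU, Finset.disjoint_sup_left]
      intro j _
      exact (hCA _).symm
    have hdisjLC : Disjoint L C := (hCA _).symm
    have hih := ih A' (fun i => hA _) (fun i j hij => hAA _ _ (by simpa using hij))
      (fun i => hCA _)
    have hr := lantern_mem hUne (hA (Fin.last b)) hC hdisjUL hdisjUC hdisjLC
    have h1 : C ∪ L = L ∪ C := Finset.union_comm _ _
    have h2 : C ∪ U = U ∪ C := Finset.union_comm _ _
    have h3 : C ∪ (U ∪ L) = U ∪ L ∪ C := Finset.union_comm _ _
    have key := AddSubgroup.sub_mem _ hih hr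
    convert key using 1
    rw [hsup, Fin.sum_univ_castSucc (f := fun i => Dg (C ∪ A i)),
      Fin.sum_univ_castSucc (f := fun i => Dg (A i)), h1, h2, h3]
    push_cast
    have hsm : ((b : ℤ) + 1 - 1) • Dg C = ((b : ℤ) - 1) • Dg C + Dg C := by
      have h : ((b : ℤ) + 1 - 1) = ((b : ℤ) - 1) + 1 := by ring
      rw [h, add_smul, one_smul]
    rw [hsm]
    abel

/-- Abelianized daisy relation (the `b`-fold iterated lantern relation): for pairwise
disjoint nonempty sets `A_1, …, A_b, C` of holes with `b ≥ 2`,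
`D_{C∪A_1} + ⋯ + D_{C∪A_b} + D_{A_1∪⋯∪A_b}
  = D_{A_1} + ⋯ + D_{A_b} + (b-1)·D_C + D_{C∪A_1∪⋯∪A_b}`
holds in the abelianized planar mapping class group. -/
theorem abelianized_daisy_relation {α : Type*} [Fintype α] [DecidableEq α]
    (b : ℕ) (hb : 2 ≤ b) (A : Fin b → Finset α) (C : Finset α)
    (hA : ∀ i, (A i).Nonempty) (hC : C.Nonempty)
    (hAA : ∀ i j, i ≠ j → Disjoint (A i) (A j))
    (hCA : ∀ i, Disjoint C (A i)) :
    (QuotientAddGroup.mk (∑ i, Dg (C ∪ A i) + Dg (Finset.univ.sup A)) :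
        TwistGroup α ⧸ lanternRelators α) =
      QuotientAddGroup.mk
        (∑ i, Dg (A i) + ((b : ℤ) - 1) • Dg C + Dg (C ∪ Finset.univ.sup A)) := by
  rw [QuotientAddGroup.eq]
  have h := AddSubgroup.neg_mem _ (daisy_diff_mem b hb A C hA hC hAA hCA)
  convert h using 1
  abel
end
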